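/- Let F be a filter on ℕ (a semifilter closed under finite intersections). There exists a cofinal F-scale if and only if 𝔟(F) = 𝔟(F⁺). -/

import Mathlib

open Set Cardinal Filter

/-- The increasing enumeration of a set of naturals (meaningful when the set is infinite). -/
noncomputable def enum (a : Set ℕ) : ℕ → ℕ := Nat.nth (· ∈ a)

/-- `a ⊎ b = {2k : k ∈ a} ∪ {2k+1 : k ∈ b}`. -/
def usum (a b : Set ℕ) : Set ℕ := (fun k => 2 * k) '' a ∪ (fun k => 2 * k + 1) '' b

/-- A semifilter: a nonempty family of infinite subsets of ℕ closed under almost-supersets. -/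
def IsSemifilter (S : Set (Set ℕ)) : Prop :=
  S.Nonempty ∧ (∀ s ∈ S, s.Infinite) ∧
    ∀ s ∈ S, ∀ b : Set ℕ, b.Infinite → (s \ b).Finite → b ∈ S

/-- \`a ≤_S b\`: the set \`[a ≤ b]\` of agreement of the enumerations belongs to \`S\`. -/
def leS (S : Set (Set ℕ)) (a b : Set ℕ) : Prop := {n | enum a n ≤ enum b n} ∈ S

/-- \`S⁺\`, the dual semifilter. -/
def splus (S : Set (Set ℕ)) : Set (Set ℕ) := {a | a.Infinite ∧ aᶜ ∉ S}

/-- \`𝔟(S)\`: the least cardinality of a \`≤_S\`-unbounded family in \`[ℕ]^∞\`. -/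
noncomputable def bofS (S : Set (Set ℕ)) : Cardinal :=
  sInf { c | ∃ X : Set (Set ℕ), (∀ x ∈ X, x.Infinite) ∧
    (¬ ∃ b : Set ℕ, b.Infinite ∧ ∀ x ∈ X, leS S x b) ∧ c = #X }

/-- An \`S\`-scale. -/
def IsScale (S X : Set (Set ℕ)) : Prop :=
  (∀ x ∈ X, x.Infinite) ∧ bofS S ≤ #X ∧
  ∀ b : Set ℕ, b.Infinite → ∃ c : Set ℕ, c.Infinite ∧ leS (splus S) b c ∧
    #{x ∈ X | ¬ leS S c x} < bofS S

/-- A cofinal \`S\`-scale. -/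
def IsCofinalScale (S X : Set (Set ℕ)) : Prop :=
  (∀ x ∈ X, x.Infinite) ∧ bofS S ≤ #X ∧
  ∀ b : Set ℕ, b.Infinite → #{x ∈ X | ¬ leS S b x} < bofS S

/-- A filter: a semifilter closed under finite intersections. -/
def IsSetFilter (F : Set (Set ℕ)) : Prop :=
  IsSemifilter F ∧ ∀ a ∈ F, ∀ b ∈ F, a ∩ b ∈ F

/-!
Since `F ⊆ F⁺`, always `𝔟(F) ≤ 𝔟(F⁺)`. If `X` is a cofinal `F`-scale, every `Y ⊆ X` of size
`𝔟(F)` is `≤_{F⁺}`-unbounded: given `b`, some `y ∈ Y` satisfies `b' ≤_F y` for a `b'` lying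
pointwise strictly above `b`, so `b <_F y`, i.e. `y ≰_{F⁺} b`.

Conversely, well-order a `≤_{F⁺}`-unbounded family `{b_i}` of size `𝔟(F⁺) = 𝔟(F)` in order type
`𝔟(F)` and choose by transfinite recursion `x_i` strictly `<_F`-above `b_i` and all earlier `x_j`;
this is possible because fewer than `𝔟(F)` sets are `≤_F`-bounded. Every `b` has some `b_i` with
`b <_F b_i`, hence `b ≤_F x_j` for all `j ≥ i`, and the `x_i` form a cofinal scale.
-/

def ltS (S : Set (Set ℕ)) (a b : Set ℕ) : Prop := {n | enum a n < enum b n} ∈ S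

def IsUnbounded (S X : Set (Set ℕ)) : Prop := ¬ ∃ b : Set ℕ, b.Infinite ∧ ∀ x ∈ X, leS S x b

lemma enum_strictMono {a : Set ℕ} (ha : a.Infinite) : StrictMono (enum a) :=
  Nat.nth_strictMono (by rwa [Set.ofPred_mem_eq])

lemma enum_range_of_strictMono {f : ℕ → ℕ} (hf : StrictMono f) : enum (range f) = f := by
  have hinf : (range f).Infinite := infinite_range_of_injective hf.injective
  rw [← (enum_strictMono hinf).range_inj hf]
  exact Nat.range_nth_of_infinite (by rwa [Set.ofPred_mem_eq])

lemma exists_infinite_forall_enum_lt {X : Set (Set ℕ)} (hX : X.Finite) :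
    ∃ c : Set ℕ, c.Infinite ∧ ∀ x ∈ X, ∀ n, enum x n < enum c n := by
  let g : ℕ → ℕ := fun n => ∑ k ∈ Finset.range (n + 1), (1 + ∑ x ∈ hX.toFinset, enum x k)
  have hg : StrictMono g := strictMono_nat_of_lt_succ fun n => by
    simp only [g, Finset.sum_range_succ _ (n + 1)]
    omega
  refine ⟨range g, infinite_range_of_injective hg.injective, fun x hx n => ?_⟩
  rw [enum_range_of_strictMono hg]
  calc enum x n < 1 + ∑ y ∈ hX.toFinset, enum y n :=
        Nat.lt_one_add_iff.2 <| Finset.single_le_sum (f := fun y => enum y n)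
          (fun _ _ => Nat.zero_le _) (hX.mem_toFinset.2 hx)
    _ ≤ g n := Finset.single_le_sum (f := fun k => 1 + ∑ y ∈ hX.toFinset, enum y k)
        (fun _ _ => Nat.zero_le _) (Finset.self_mem_range_succ n)

section Semifilter

variable {S : Set (Set ℕ)} {a b c : Set ℕ}

lemma IsSemifilter.mem_of_superset (hS : IsSemifilter S) (ha : a ∈ S) (hab : a ⊆ b) : b ∈ S :=
  hS.2.2 a ha b ((hS.2.1 a ha).mono hab) (by simp [sdiff_eq_empty.2 hab])

lemma IsSemifilter.mem_of_compl_finite (hS : IsSemifilter S) (ha : aᶜ.Finite) : a ∈ S := by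
  obtain ⟨s, hs⟩ := hS.1
  exact hS.2.2 s hs a (by simpa using ha.infinite_compl) (ha.subset fun _ hx => hx.2)

lemma IsSemifilter.univ_mem (hS : IsSemifilter S) : Set.univ ∈ S :=
  hS.mem_of_compl_finite (by simp)

lemma IsSemifilter.empty_notMem (hS : IsSemifilter S) : ∅ ∉ S :=
  fun h => hS.2.1 ∅ h finite_empty

lemma IsSemifilter.leS_of_forall_le (hS : IsSemifilter S) (h : ∀ n, enum a n ≤ enum b n) :
    leS S a b := by
  rw [leS, eq_univ_of_forall (s := {n | enum a n ≤ enum b n}) h]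
  exact hS.univ_mem

lemma IsSemifilter.leS_of_ltS (hS : IsSemifilter S) (h : ltS S a b) : leS S a b :=
  hS.mem_of_superset h fun n (hn : enum a n < enum b n) => hn.le

lemma IsSemifilter.not_ltS_self (hS : IsSemifilter S) : ¬ ltS S a a := by
  simpa [ltS] using hS.empty_notMem

lemma IsSemifilter.ltS_of_forall_lt_of_leS (hS : IsSemifilter S) (hab : ∀ n, enum a n < enum b n)
    (hbc : leS S b c) : ltS S a c :=
  hS.mem_of_superset hbc fun n hn => (hab n).trans_le hn

lemma IsSemifilter.ltS_of_leS_of_forall_lt (hS : IsSemifilter S) (hab : leS S a b)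
    (hbc : ∀ n, enum b n < enum c n) : ltS S a c :=
  hS.mem_of_superset hab fun n hn => lt_of_le_of_lt hn (hbc n)

lemma IsSemifilter.not_leS_splus_iff (hS : IsSemifilter S) :
    ¬ leS (splus S) a b ↔ ltS S b a := by
  have hcompl : {n | enum a n ≤ enum b n}ᶜ = {n | enum b n < enum a n} := by
    ext n
    simp
  rw [leS, splus, mem_ofPred_eq, hcompl, ltS, not_and_or, not_infinite, not_not]
  refine ⟨fun h => h.elim (fun hfin => hS.mem_of_compl_finite ?_) id, Or.inr⟩
  rwa [← hcompl, compl_compl]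

end Semifilter

section Bounding

variable {S : Set (Set ℕ)} {X : Set (Set ℕ)}

lemma bofS_le_mk_of_isUnbounded (hX : ∀ x ∈ X, x.Infinite) (hunb : IsUnbounded S X) : bofS S ≤ #X :=
  csInf_le' ⟨X, hX, hunb, rfl⟩

lemma exists_leS_of_mk_lt_bofS (hX : ∀ x ∈ X, x.Infinite) (h : #X < bofS S) :
    ∃ b : Set ℕ, b.Infinite ∧ ∀ x ∈ X, leS S x b :=
  not_not.1 fun hunb => (bofS_le_mk_of_isUnbounded hX hunb).not_gt h

lemma isUnbounded_setOf_infinite (hS : ∅ ∉ S) : IsUnbounded S {a | a.Infinite} := by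
  rintro ⟨b, -, hb⟩
  obtain ⟨x, hx, hbx⟩ := exists_infinite_forall_enum_lt (finite_singleton b)
  have hempty : {n | enum x n ≤ enum b n} = ∅ :=
    eq_empty_of_forall_notMem fun n hn => (hbx b rfl n).not_ge hn
  exact hS (hempty ▸ hb x hx)

lemma exists_isUnbounded_mk_eq_bofS (hS : ∅ ∉ S) :
    ∃ X : Set (Set ℕ), (∀ x ∈ X, x.Infinite) ∧ IsUnbounded S X ∧ #X = bofS S := by
  obtain ⟨X, hX, hunb, hcard⟩ := csInf_mem
    (s := {c | ∃ X : Set (Set ℕ), (∀ x ∈ X, x.Infinite) ∧ IsUnbounded S X ∧ c = #X})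
    ⟨_, _, fun _ => id, isUnbounded_setOf_infinite hS, rfl⟩
  exact ⟨X, hX, hunb, hcard.symm⟩

lemma bofS_mono {T : Set (Set ℕ)} (hT : ∅ ∉ T) (hST : S ⊆ T) : bofS S ≤ bofS T :=
  csInf_le_csInf' ⟨_, _, fun _ => id, isUnbounded_setOf_infinite hT, rfl⟩
    fun _ ⟨X, hX, hunb, hc⟩ =>
      ⟨X, hX, fun ⟨b, hb, hXb⟩ => hunb ⟨b, hb, fun x hx => hST (hXb x hx)⟩, hc⟩

lemma IsSemifilter.aleph0_le_bofS (hS : IsSemifilter S) : ℵ₀ ≤ bofS S := by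
  obtain ⟨X, hX, hunb, hcard⟩ := exists_isUnbounded_mk_eq_bofS hS.empty_notMem
  refine le_of_not_gt fun hlt => hunb ?_
  obtain ⟨c, hc, hXc⟩ :=
    exists_infinite_forall_enum_lt (lt_aleph0_iff_set_finite.1 (hcard ▸ hlt))
  exact ⟨c, hc, fun x hx => hS.leS_of_forall_le fun n => (hXc x hx n).le⟩

lemma IsSemifilter.exists_ltS_of_mk_lt_bofS (hS : IsSemifilter S) (hX : ∀ x ∈ X, x.Infinite)
    (h : #X < bofS S) : ∃ c : Set ℕ, c.Infinite ∧ ∀ x ∈ X, ltS S x c := by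
  obtain ⟨b, -, hXb⟩ := exists_leS_of_mk_lt_bofS hX h
  obtain ⟨c, hc, hbc⟩ := exists_infinite_forall_enum_lt (finite_singleton b)
  exact ⟨c, hc, fun x hx => hS.ltS_of_leS_of_forall_lt (hXb x hx) (hbc b rfl)⟩

end Bounding

lemma empty_notMem_splus (S : Set (Set ℕ)) : ∅ ∉ splus S := fun h => h.1 finite_empty

lemma IsSemifilter.bofS_splus_le_of_isCofinalScale {S X : Set (Set ℕ)} (hS : IsSemifilter S)
    (hX : IsCofinalScale S X) : bofS (splus S) ≤ bofS S := by
  obtain ⟨Y, hYX, hY⟩ := le_mk_iff_exists_subset.1 hX.2.1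
  refine hY ▸ bofS_le_mk_of_isUnbounded (fun y hy => hX.1 y (hYX hy)) ?_
  rintro ⟨b, -, hYb⟩
  obtain ⟨b', hb', hbb'⟩ := exists_infinite_forall_enum_lt (finite_singleton b)
  obtain ⟨y, hy, hb'y⟩ : ∃ y ∈ Y, leS S b' y := by
    by_contra! h
    have hsub : Y ⊆ {x ∈ X | ¬ leS S b' x} := fun y hy => ⟨hYX hy, h y hy⟩
    exact (mk_le_mk_of_subset hsub).not_gt (hY ▸ hX.2.2 b' hb')
  exact hS.not_leS_splus_iff.2 (hS.ltS_of_forall_lt_of_leS (hbb' b rfl) hb'y) (hYb y hy)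

section SetFilter

variable {F : Set (Set ℕ)} {a b c : Set ℕ}

lemma IsSetFilter.subset_splus (hF : IsSetFilter F) : F ⊆ splus F := fun a ha =>
  show a.Infinite ∧ aᶜ ∉ F from
    ⟨hF.1.2.1 a ha, fun hc => hF.1.empty_notMem (inter_compl_self a ▸ hF.2 a ha aᶜ hc)⟩

lemma IsSetFilter.ltS_trans (hF : IsSetFilter F) (hab : ltS F a b) (hbc : ltS F b c) :
    ltS F a c :=
  hF.1.mem_of_superset (hF.2 _ hab _ hbc)
    fun n (hn : enum a n < enum b n ∧ enum b n < enum c n) => hn.1.trans hn.2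

lemma IsSetFilter.bofS_le_bofS_splus (hF : IsSetFilter F) : bofS F ≤ bofS (splus F) :=
  bofS_mono (empty_notMem_splus F) hF.subset_splus

end SetFilter

lemma exists_seq_of_forall_exists_bound {T α : Type*} [LinearOrder T] [WellFoundedLT T]
    (Q : T → α → Prop) (R : α → α → Prop)
    (h : ∀ i (g : Iio i → α), ∃ x, Q i x ∧ ∀ j, R (g j) x) :
    ∃ f : T → α, ∀ i, Q i (f i) ∧ ∀ j < i, R (f j) (f i) := by
  choose x hxQ hxR using h
  let f : T → α := wellFounded_lt.fix fun i rec => x i fun j => rec j j.2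
  have hf : ∀ i, f i = x i fun j => f j := wellFounded_lt.fix_eq _
  refine ⟨f, fun i => ?_⟩
  rw [hf i]
  exact ⟨hxQ i _, fun j hj => hxR i (fun j => f j) ⟨j, hj⟩⟩

lemma IsSemifilter.exists_ltS_increasing_above {S : Set (Set ℕ)} {T : Type} [LinearOrder T]
    [WellFoundedLT T] (hS : IsSemifilter S) (hT : ∀ i : T, #(Iio i) < bofS S) (b : T → Set ℕ)
    (hb : ∀ i, (b i).Infinite) :
    ∃ f : T → {a : Set ℕ // a.Infinite}, ∀ i, ltS S (b i) (f i) ∧ ∀ j < i, ltS S (f j) (f i) :=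
  exists_seq_of_forall_exists_bound (fun i (x : {a : Set ℕ // a.Infinite}) => ltS S (b i) x)
    (fun x y => ltS S x y) fun i g => by
    obtain ⟨c, hc, hbc⟩ := hS.exists_ltS_of_mk_lt_bofS
      (X := insert (b i) (range fun j => (g j : Set ℕ)))
      (by rintro _ (rfl | ⟨j, rfl⟩); exacts [hb i, (g j).2])
      (mk_insert_le.trans_lt (add_one_lt_of_lt hS.aleph0_le_bofS (mk_range_le.trans_lt (hT i))))
    exact ⟨⟨c, hc⟩, hbc _ (mem_insert _ _), fun j => hbc _ (mem_insert_of_mem _ ⟨j, rfl⟩)⟩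

open Ordinal in
lemma IsSetFilter.exists_isCofinalScale_of_isUnbounded {F : Set (Set ℕ)} {T : Type}
    [LinearOrder T] [WellFoundedLT T] (hF : IsSetFilter F) (hT : ord #T = typeLT T)
    (hTF : #T = bofS F) (b : T → Set ℕ) (hb : ∀ i, (b i).Infinite)
    (hunb : IsUnbounded (splus F) (range b)) : ∃ X, IsCofinalScale F X := by
  obtain ⟨f, hf⟩ := hF.1.exists_ltS_increasing_above (fun i => hTF ▸ mk_Iio_lt i hT) b hb
  have hf_inj : Function.Injective f := by
    intro i j hij
    by_contra hne
    wlog h : i < j generalizing i j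
    · exact this hij.symm (Ne.symm hne) ((Ne.symm hne).lt_of_le (not_lt.1 h))
    exact hF.1.not_ltS_self (hij ▸ (hf j).2 i h)
  refine ⟨range fun i => (f i : Set ℕ), ?_, ?_, fun c hc => ?_⟩
  · rintro _ ⟨i, rfl⟩
    exact (f i).2
  · rw [mk_range_eq (fun i => (f i : Set ℕ)) (Subtype.val_injective.comp hf_inj), hTF]
  obtain ⟨i, hi⟩ : ∃ i, ltS F c (b i) := by
    by_contra! h
    refine hunb ⟨c, hc, ?_⟩
    rintro _ ⟨i, rfl⟩
    exact not_not.1 (mt hF.1.not_leS_splus_iff.1 (h i))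
  have hbad : {x ∈ range fun i => (f i : Set ℕ) | ¬ leS F c x} ⊆
      (fun j => (f j : Set ℕ)) '' Iic i := by
    rintro _ ⟨⟨j, rfl⟩, hj⟩
    refine ⟨j, le_of_not_gt fun hij => hj (hF.1.leS_of_ltS ?_), rfl⟩
    exact hF.ltS_trans (hF.ltS_trans hi (hf i).1) ((hf j).2 i hij)
  calc _ ≤ _ := mk_le_mk_of_subset hbad
    _ ≤ #(Iic i) := mk_image_le
    _ < #T := mk_Iic_lt i hT (hTF ▸ hF.1.aleph0_le_bofS)
    _ = bofS F := hTF

theorem stmt15 (F : Set (Set ℕ)) (hF : IsSetFilter F) :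
    (∃ X : Set (Set ℕ), IsCofinalScale F X) ↔ bofS F = bofS (splus F) := by
  refine ⟨fun ⟨X, hX⟩ => le_antisymm hF.bofS_le_bofS_splus
    (hF.1.bofS_splus_le_of_isCofinalScale hX), fun h => ?_⟩
  obtain ⟨X₀, hX₀, hunb, hcard⟩ := exists_isUnbounded_mk_eq_bofS (empty_notMem_splus F)
  let T := (bofS F).ord.ToType
  have hTF : #T = bofS F := by simp [T]
  obtain ⟨e⟩ : Nonempty (T ≃ X₀) := Cardinal.eq.1 (hTF.trans (h.trans hcard.symm))
  refine hF.exists_isCofinalScale_of_isUnbounded (by rw [hTF, Ordinal.type_toType]) hTF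
    (Subtype.val ∘ e) (fun i => hX₀ _ (e i).2) ?_
  rwa [e.surjective.range_comp Subtype.val, Subtype.range_coe]
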